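/- Let L be a finite-dimensional non-abelian Lie algebra over the finite field F_q. Then dim L/Z(L) = 2 if and only if d(L) = (q² + q − 1)/q³. -/

import Mathlib

/-!
Counting commuting pairs by their first entry gives `|L|² d(L) = ∑ₓ |C(x)|`, where `C(x)` is the
centralizer of `x`. A central `x` contributes `|L|`; for non-central `x` we have
`Z(L) < C(x) < L`, so `|C(x)| ≤ |L|/q`. With `n = dim L/Z(L)` and `|Z(L)| = |L|/qⁿ` this yields
`d(L) ≤ (qⁿ + q - 1)/q^(n+1)`, with equality when every such `C(x)` has codimension one. For
`n = 2` this is forced by `Z(L) < C(x) < L`. A non-abelian `L` has `n ≥ 2`, and for `n ≥ 3`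
the bound lies strictly below its value at `n = 2`.
-/

/-- The commutativity degree of a finite Lie ring `L`:
the probability that two randomly chosen elements commute. -/
noncomputable def commDeg (L : Type*) [LieRing L] : ℚ :=
  (Nat.card {p : L × L // ⁅p.1, p.2⁆ = 0} : ℚ) / (Nat.card L : ℚ) ^ 2

open Module

namespace LieAlgebra

variable (F : Type*) {L : Type*} [Field F] [LieRing L] [LieAlgebra F L]

def centralizer (x : L) : Submodule F L :=
  LinearMap.ker (ad F L x)

variable {F}

@[simp]
theorem mem_centralizer {x y : L} : y ∈ centralizer F x ↔ ⁅x, y⁆ = 0 :=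
  Iff.rfl

theorem centralizer_eq_top_iff {x : L} : centralizer F x = ⊤ ↔ x ∈ center F L := by
  simp only [Submodule.eq_top_iff', mem_centralizer, LieModule.mem_maxTrivSubmodule,
    ← lie_skew x, neg_eq_zero]

theorem center_lt_centralizer {x : L} (hx : x ∉ center F L) :
    (center F L).toSubmodule < centralizer F x :=
  SetLike.lt_iff_le_and_exists.mpr ⟨fun y hy => by simpa using hy x, x, by simp, hx⟩

section FiniteDimensional

variable [FiniteDimensional F L]

variable (F L) in
theorem finrank_quotient_center_add_finrank_center :
    finrank F (L ⧸ center F L) + finrank F (center F L).toSubmodule = finrank F L :=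
  Submodule.finrank_quotient_add_finrank _

theorem finrank_center_lt_finrank_centralizer {x : L} (hx : x ∉ center F L) :
    finrank F (center F L).toSubmodule < finrank F (centralizer F x) :=
  Submodule.finrank_lt_finrank_of_lt (center_lt_centralizer hx)

theorem finrank_centralizer_lt_finrank {x : L} (hx : x ∉ center F L) :
    finrank F (centralizer F x) < finrank F L :=
  Submodule.finrank_lt (mt centralizer_eq_top_iff.mp hx)

theorem two_le_finrank_quotient_center (h : ¬IsLieAbelian L) :
    2 ≤ finrank F (L ⧸ center F L) := by
  obtain ⟨x, hx⟩ : ∃ x, x ∉ center F L := by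
    by_contra! hL
    exact h ((isLieAbelian_iff_center_eq_top F L).mpr (eq_top_iff.mpr fun x _ => hL x))
  have := finrank_quotient_center_add_finrank_center F L
  have := finrank_center_lt_finrank_centralizer hx
  have := finrank_centralizer_lt_finrank hx
  omega

theorem finrank_centralizer_add_one_eq_finrank (h : finrank F (L ⧸ center F L) = 2) {x : L}
    (hx : x ∉ center F L) : finrank F (centralizer F x) + 1 = finrank F L := by
  have := finrank_quotient_center_add_finrank_center F L
  have := finrank_center_lt_finrank_centralizer hx
  have := finrank_centralizer_lt_finrank hx
  omega

end FiniteDimensional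

end LieAlgebra

section CommutativityDegree

open LieAlgebra Finset

variable {F L : Type*} [Field F] [LieRing L] [LieAlgebra F L]

theorem natCard_commuting_pairs [Fintype L] :
    Nat.card {p : L × L // ⁅p.1, p.2⁆ = 0} = ∑ x : L, Nat.card (centralizer F x) := by
  classical
  simp_rw [Nat.card_congr (Equiv.subtypeProdEquivSigmaSubtype fun x y : L => ⁅x, y⁆ = 0),
    Nat.card_eq_fintype_card, Fintype.card_sigma]
  rfl

theorem natCard_center_mul_pow_finrank_quotient [Finite L] :
    Nat.card (center F L) * Nat.card F ^ finrank F (L ⧸ center F L) = Nat.card L := by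
  rw [natCard_eq_pow_finrank (K := F) (V := L),
    ← finrank_quotient_center_add_finrank_center F L, pow_add, mul_comm,
    ← natCard_eq_pow_finrank (K := F) (V := (center F L).toSubmodule)]
  rfl

theorem natCard_mul_natCard_centralizer_le [Finite F] [Finite L] {x : L} (hx : x ∉ center F L) :
    Nat.card F * Nat.card (centralizer F x) ≤ Nat.card L := by
  rw [natCard_eq_pow_finrank (K := F) (V := L),
    natCard_eq_pow_finrank (K := F) (V := centralizer F x), ← pow_succ']
  exact Nat.pow_le_pow_right Nat.card_pos (finrank_centralizer_lt_finrank hx)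

open Classical in
theorem commDeg_eq_sub [Finite F] [Fintype L] :
    commDeg L = ((Nat.card F : ℚ) ^ finrank F (L ⧸ center F L) + Nat.card F - 1) /
        (Nat.card F : ℚ) ^ (finrank F (L ⧸ center F L) + 1) -
      (∑ x with x ∉ center F L, ((Nat.card L : ℚ) - Nat.card F * Nat.card (centralizer F x))) /
        (Nat.card F * Nat.card L ^ 2) := by
  have hcentral : ∑ x with x ∈ center F L, (Nat.card (centralizer F x) : ℚ) =
      Nat.card (center F L) * Nat.card L := by
    rw [sum_congr rfl fun x hx => by rw [centralizer_eq_top_iff.mpr (mem_filter.mp hx).2]]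
    simp [Nat.card_eq_fintype_card, Fintype.card_subtype]
  have hcard : (#{x | x ∉ center F L} : ℚ) = Nat.card L - Nat.card (center F L) := by
    rw [eq_sub_iff_add_eq', Nat.card_eq_fintype_card, Nat.card_eq_fintype_card,
      Fintype.card_subtype]
    exact_mod_cast (card_filter_add_card_filter_not (s := univ) (· ∈ center F L)).trans card_univ
  have hL : (Nat.card L : ℚ) =
      Nat.card (center F L) * (Nat.card F : ℚ) ^ finrank F (L ⧸ center F L) := by
    exact_mod_cast (natCard_center_mul_pow_finrank_quotient (F := F) (L := L)).symm
  rw [commDeg, natCard_commuting_pairs (F := F),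
    ← sum_filter_add_sum_filter_not univ (· ∈ center F L), sum_sub_distrib, sum_const,
    nsmul_eq_mul, ← mul_sum]
  push_cast
  rw [hcentral, hcard, hL]
  have hq : (0 : ℚ) < Nat.card F := Nat.cast_pos.mpr Nat.card_pos
  have hZ : (0 : ℚ) < Nat.card (center F L) := Nat.cast_pos.mpr Nat.card_pos
  field_simp
  ring

theorem commDeg_le [Finite F] [Fintype L] :
    commDeg L ≤ ((Nat.card F : ℚ) ^ finrank F (L ⧸ center F L) + Nat.card F - 1) /
      (Nat.card F : ℚ) ^ (finrank F (L ⧸ center F L) + 1) := by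
  classical
  rw [commDeg_eq_sub (F := F)]
  refine sub_le_self _ (div_nonneg (sum_nonneg fun x hx => ?_) (by positivity))
  rw [sub_nonneg]
  exact_mod_cast natCard_mul_natCard_centralizer_le (mem_filter.mp hx).2

theorem commDeg_eq_of_finrank_centralizer_add_one_eq [Finite F] [Fintype L]
    (h : ∀ x ∉ center F L, finrank F (centralizer F x) + 1 = finrank F L) :
    commDeg L = ((Nat.card F : ℚ) ^ finrank F (L ⧸ center F L) + Nat.card F - 1) /
      (Nat.card F : ℚ) ^ (finrank F (L ⧸ center F L) + 1) := by
  classical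
  rw [commDeg_eq_sub (F := F), sum_eq_zero fun x hx => ?_, zero_div, sub_zero]
  rw [sub_eq_zero, natCard_eq_pow_finrank (K := F) (V := L), ← h x (mem_filter.mp hx).2,
    natCard_eq_pow_finrank (K := F) (V := centralizer F x)]
  push_cast
  ring

end CommutativityDegree

theorem strictAnti_pow_add_sub_one_div_pow_succ {K : Type*} [Field K] [LinearOrder K]
    [IsStrictOrderedRing K] {q : K} (hq : 1 < q) :
    StrictAnti fun n : ℕ => (q ^ n + q - 1) / q ^ (n + 1) := by
  intro m n hmn
  have key (k : ℕ) : (q ^ k + q - 1) / q ^ (k + 1) = q⁻¹ + (q - 1) / q ^ (k + 1) := by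
    field_simp
    ring
  simp only [key]
  gcongr

/-- If `L` is a finite-dimensional non-abelian Lie algebra over the finite
field `F_q`, then `dim L/Z(L) = 2` if and only if `d(L) = (q² + q − 1)/q³`. -/
theorem finrank_central_quotient_eq_two_iff
    (q : ℕ) (F : Type*) [Field F] [Fintype F] (hF : Fintype.card F = q)
    (L : Type*) [LieRing L] [LieAlgebra F L] [Finite L]
    (hna : ¬IsLieAbelian L) :
    Module.finrank F (L ⧸ LieAlgebra.center F L) = 2 ↔
      commDeg L = ((q : ℚ) ^ 2 + q - 1) / (q : ℚ) ^ 3 := by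
  have := Fintype.ofFinite L
  rw [Fintype.card_eq_nat_card] at hF
  subst hF
  constructor
  · intro h
    rw [commDeg_eq_of_finrank_centralizer_add_one_eq fun x hx =>
      LieAlgebra.finrank_centralizer_add_one_eq_finrank h hx, h]
  · intro hd
    by_contra hne
    have hq : (1 : ℚ) < Nat.card F := by exact_mod_cast Finite.one_lt_card
    have hlt := strictAnti_pow_add_sub_one_div_pow_succ hq
      ((LieAlgebra.two_le_finrank_quotient_center hna).lt_of_ne' hne)
    exact (commDeg_le.trans_lt hlt).ne hd
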